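/- Let $0 < |q| < 1$ and $0 < |s| < 1$. For $m \in \mathbb{Z}_{\ge 0}$, the Laurent polynomial $G_m(x) := \dfrac{(qsx;q)_m (sx^{-1};q)_m}{(q^{1+m}s^2;q)_m (q^{-m};q)_m}$ has degree $\le m$ and satisfies $G_m(q^k s^{\mathrm{sgn}(k)}) = \delta_{m,k}$ for all $k \in \mathbb{Z}$ with $|k| \le m$, where $\mathrm{sgn}(k) = 1$ if $k \ge 0$ and $-1$ if $k < 0$. -/

import Mathlib

/-!
Pairing the factors of the numerator as `(1 - q^{i+1} s x)(1 - q^i s x⁻¹)` writes `G_m` as a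
constant times a product of `m` Laurent polynomials with exponents in `{-1, 0, 1}`, so its degree
is at most `m`. At `x = q^n s` with `n < m` the factor `1 - q^n s x⁻¹` vanishes, at
`x = q^{-n-1} s⁻¹` with `n < m` the factor `1 - q^{n+1} s x` vanishes, and at `x = q^m s` the
numerator equals the denominator, which is nonzero since `|q^{1+m} s²| < 1` and `|q| < 1`.
-/

noncomputable section
open Finset

/-- The `q`-shifted factorial `(a;q)_k = (1-a)(1-qa)⋯(1-q^{k-1}a)`. -/
def qPoch (q a : ℂ) (k : ℕ) : ℂ := ∏ i ∈ Finset.range k, (1 - q ^ i * a)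

/-- The one-variable symmetric interpolation polynomial
`R_m(x) = (sx;q)_m (sx⁻¹;q)_m / ((q^m s²;q)_m (q^{-m};q)_m)`. -/
def Rone (q s : ℂ) (m : ℕ) (x : ℂ) : ℂ :=
  (qPoch q (s * x) m * qPoch q (s * x⁻¹) m) /
    (qPoch q (q ^ m * s ^ 2) m * qPoch q (q ^ (-(m : ℤ))) m)

/-- The one-variable nonsymmetric interpolation polynomial of degree `m ≥ 0`:
`G_m(x) = (qsx;q)_m (sx⁻¹;q)_m / ((q^{1+m} s²;q)_m (q^{-m};q)_m)`. -/
def Gone (q s : ℂ) (m : ℕ) (x : ℂ) : ℂ :=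
  (qPoch q (q * s * x) m * qPoch q (s * x⁻¹) m) /
    (qPoch q (q ^ (1 + m) * s ^ 2) m * qPoch q (q ^ (-(m : ℤ))) m)

/-- The one-variable nonsymmetric interpolation polynomial of degree `-m`, `m > 0`:
`G_{-m}(x) = q^m s x (qsx;q)_{m-1} (sx⁻¹;q)_{m+1} / ((q^m s²;q)_{m+1} (q^{1-m};q)_{m-1})`. -/
def GnegOne (q s : ℂ) (m : ℕ) (x : ℂ) : ℂ :=
  (q ^ m * s * x * qPoch q (q * s * x) (m - 1) * qPoch q (s * x⁻¹) (m + 1)) /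
    (qPoch q (q ^ m * s ^ 2) (m + 1) * qPoch q (q ^ (1 - (m : ℤ))) (m - 1))

/-- Evaluation of a one-variable Laurent polynomial. -/
def eval1 (c : ℤ →₀ ℂ) (x : ℂ) : ℂ := c.sum fun j a => a * x ^ j

open LaurentPolynomial

section QPochhammer

variable {q a : ℂ} {k : ℕ}

lemma qPoch_eq_zero_of_pow_mul_eq_one {i : ℕ} (hi : i < k) (h : q ^ i * a = 1) :
    qPoch q a k = 0 :=
  Finset.prod_eq_zero (Finset.mem_range.2 hi) (by rw [h, sub_self])

lemma qPoch_ne_zero_of_norm_lt_one (hq : ‖q‖ ≤ 1) (ha : ‖a‖ < 1) : qPoch q a k ≠ 0 := by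
  refine Finset.prod_ne_zero_iff.2 fun i _ h => ?_
  have hlt : ‖q ^ i * a‖ < 1 := by
    rw [norm_mul, norm_pow]
    exact mul_lt_one_of_nonneg_of_lt_one_right (pow_le_one₀ (norm_nonneg q) hq) (norm_nonneg a) ha
  rw [← eq_of_sub_eq_zero h, norm_one] at hlt
  exact hlt.false

lemma qPoch_zpow_neg_ne_zero (hq0 : q ≠ 0) (hq1 : ‖q‖ < 1) :
    qPoch q (q ^ (-(k : ℤ))) k ≠ 0 := by
  refine Finset.prod_ne_zero_iff.2 fun i hi h => ?_
  have hpow : q ^ i = q ^ k := by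
    rw [zpow_neg, zpow_natCast, sub_eq_zero, eq_comm, mul_inv_eq_one₀ (pow_ne_zero k hq0)] at h
    exact h
  have := pow_lt_pow_right_of_lt_one₀ (norm_pos_iff.2 hq0) hq1 (Finset.mem_range.1 hi)
  rw [← norm_pow, ← norm_pow, hpow] at this
  exact this.false

end QPochhammer

lemma eval1_coeff (f : ℂ[T;T⁻¹]) {x : ℂ} (hx : x ≠ 0) :
    eval1 f.coeff x = eval₂ (RingHom.id ℂ) (Units.mk0 x hx) f := by
  induction f using LaurentPolynomial.induction_on' with
  | add f g hf hg =>
    rw [map_add, ← hf, ← hg, eval1, eval1, eval1, AddMonoidAlgebra.coeff_add]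
    exact Finsupp.sum_add_index' (fun _ => zero_mul _) fun _ _ _ => add_mul _ _ _
  | C_mul_T n r =>
    rw [← single_eq_C_mul_T, AddMonoidAlgebra.coeff_single, eval1, Finsupp.sum_single_index
      (zero_mul _), single_eq_C_mul_T, eval₂_C_mul_T, Units.val_zpow_eq_zpow_val, Units.val_mk0]
    rfl

lemma sup_natAbs_support_C_mul_T_le (r : ℂ) (n : ℤ) :
    (C r * T n).coeff.support.sup Int.natAbs ≤ n.natAbs :=
  (Finset.sup_mono (support_C_mul_T r n)).trans_eq (Finset.sup_singleton)

lemma one_sub_C_mul_T_one_mul_one_sub_C_mul_T_neg_one (a b : ℂ) :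
    ((1 - C a * T 1) * (1 - C b * T (-1)) : ℂ[T;T⁻¹]) =
      C (1 + a * b) * T 0 + C (-a) * T 1 + C (-b) * T (-1) := by
  calc ((1 - C a * T 1) * (1 - C b * T (-1)) : ℂ[T;T⁻¹])
      = 1 + C a * C b * (T 1 * T (-1)) - C a * T 1 - C b * T (-1) := by ring
    _ = _ := by
      rw [← T_add, add_neg_cancel, T_zero]
      simp only [map_add, map_one, map_mul, map_neg]
      ring

lemma sup_natAbs_support_factor_le (a b : ℂ) :
    ((1 - C a * T 1) * (1 - C b * T (-1)) : ℂ[T;T⁻¹]).coeff.support.sup Int.natAbs ≤ 1 := by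
  rw [one_sub_C_mul_T_one_mul_one_sub_C_mul_T_neg_one]
  grw [AddMonoidAlgebra.sup_support_coeff_add_le, AddMonoidAlgebra.sup_support_coeff_add_le,
    sup_natAbs_support_C_mul_T_le, sup_natAbs_support_C_mul_T_le, sup_natAbs_support_C_mul_T_le]
  simp

/-- The numerator `(qsx;q)_m (sx⁻¹;q)_m` of `G_m` as a Laurent polynomial in `x`. -/
def goneNumerator (q s : ℂ) (m : ℕ) : ℂ[T;T⁻¹] :=
  ∏ i ∈ range m, (1 - C (q ^ i * (q * s)) * T 1) * (1 - C (q ^ i * s) * T (-1))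

lemma eval₂_goneNumerator (q s : ℂ) (m : ℕ) {x : ℂ} (hx : x ≠ 0) :
    eval₂ (RingHom.id ℂ) (Units.mk0 x hx) (goneNumerator q s m) =
      qPoch q (q * s * x) m * qPoch q (s * x⁻¹) m := by
  rw [goneNumerator, map_prod, qPoch, qPoch, ← Finset.prod_mul_distrib]
  refine Finset.prod_congr rfl fun i _ => ?_
  simp only [map_mul, map_sub, map_one, eval₂_C, eval₂_T, RingHom.id_apply, zpow_one, zpow_neg,
    Units.val_inv_eq_inv_val, Units.val_mk0]
  ring

lemma sup_natAbs_support_goneNumerator_le (q s : ℂ) (m : ℕ) :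
    (goneNumerator q s m).coeff.support.sup Int.natAbs ≤ m := by
  grw [goneNumerator, AddMonoidAlgebra.sup_support_coeff_finsetProd_le (by simp)
    Int.natAbs_add_le, Finset.sum_le_sum fun i _ => sup_natAbs_support_factor_le _ _]
  simp

lemma exists_laurent_eq_gone (q s : ℂ) (m : ℕ) :
    ∃ c : ℤ →₀ ℂ, (∀ j ∈ c.support, j.natAbs ≤ m) ∧ ∀ x : ℂ, x ≠ 0 → eval1 c x = Gone q s m x := by
  set d := qPoch q (q ^ (1 + m) * s ^ 2) m * qPoch q (q ^ (-(m : ℤ))) m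
  refine ⟨(C d⁻¹ * goneNumerator q s m).coeff, fun j hj => ?_, fun x hx => ?_⟩
  · have hsup : (C d⁻¹ * goneNumerator q s m).coeff.support.sup Int.natAbs ≤ m := by
      grw [AddMonoidAlgebra.sup_support_coeff_mul_le Int.natAbs_add_le, ← mul_one (C d⁻¹),
        ← T_zero, sup_natAbs_support_C_mul_T_le, sup_natAbs_support_goneNumerator_le]
      simp
    exact (Finset.sup_le_iff.1 hsup) j hj
  · rw [eval1_coeff _ hx, map_mul, eval₂_C, eval₂_goneNumerator, Gone, div_eq_inv_mul]
    rfl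

section Interpolation

variable {q s : ℂ} {m : ℕ}

lemma gone_denominator_ne_zero (hq0 : q ≠ 0) (hq1 : ‖q‖ < 1) (hs1 : ‖s‖ < 1) :
    qPoch q (q ^ (1 + m) * s ^ 2) m * qPoch q (q ^ (-(m : ℤ))) m ≠ 0 := by
  refine mul_ne_zero (qPoch_ne_zero_of_norm_lt_one hq1.le ?_) (qPoch_zpow_neg_ne_zero hq0 hq1)
  rw [norm_mul, norm_pow, norm_pow]
  exact mul_lt_one_of_nonneg_of_lt_one_left (by positivity)
    (pow_lt_one₀ (norm_nonneg q) hq1 (by omega)) (pow_le_one₀ (norm_nonneg s) hs1.le)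

lemma gone_pow_mul_self (hq0 : q ≠ 0) (hq1 : ‖q‖ < 1) (hs0 : s ≠ 0) (hs1 : ‖s‖ < 1) :
    Gone q s m (q ^ m * s) = 1 := by
  have hnum : q * s * (q ^ m * s) = q ^ (1 + m) * s ^ 2 := by ring
  have hden : s * (q ^ m * s)⁻¹ = q ^ (-(m : ℤ)) := by
    rw [zpow_neg, zpow_natCast]
    field_simp
  rw [Gone, hnum, hden, div_self (gone_denominator_ne_zero hq0 hq1 hs1)]

lemma gone_pow_mul_of_lt (hq0 : q ≠ 0) (hs0 : s ≠ 0) {n : ℕ} (hn : n < m) :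
    Gone q s m (q ^ n * s) = 0 := by
  have hzero : qPoch q (s * (q ^ n * s)⁻¹) m = 0 :=
    qPoch_eq_zero_of_pow_mul_eq_one hn (by field_simp)
  rw [Gone, hzero, mul_zero, zero_div]

lemma gone_inv_pow_mul_inv_of_lt (hq0 : q ≠ 0) (hs0 : s ≠ 0) {n : ℕ} (hn : n < m) :
    Gone q s m ((q ^ (n + 1))⁻¹ * s⁻¹) = 0 := by
  have hzero : qPoch q (q * s * ((q ^ (n + 1))⁻¹ * s⁻¹)) m = 0 :=
    qPoch_eq_zero_of_pow_mul_eq_one hn (by field_simp; ring)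
  rw [Gone, hzero, zero_mul, zero_div]

end Interpolation

/-- `G_m` (`m ≥ 0`) is a Laurent polynomial of degree `≤ m` and satisfies
`G_m(q^k s^{sgn k}) = δ_{m,k}` for all `k ∈ ℤ` with `|k| ≤ m`. -/
theorem stmt8 (q s : ℂ) (hq0 : 0 < ‖q‖) (hq1 : ‖q‖ < 1)
    (hs0 : 0 < ‖s‖) (hs1 : ‖s‖ < 1) (m : ℕ) :
    (∃ c : ℤ →₀ ℂ, (∀ j ∈ c.support, j.natAbs ≤ m) ∧
      ∀ x : ℂ, x ≠ 0 → eval1 c x = Gone q s m x) ∧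
    ∀ k : ℤ, k.natAbs ≤ m →
      Gone q s m (q ^ k * (if 0 ≤ k then s else s⁻¹)) = if k = (m : ℤ) then 1 else 0 := by
  have hq : q ≠ 0 := norm_pos_iff.1 hq0
  have hs : s ≠ 0 := norm_pos_iff.1 hs0
  refine ⟨exists_laurent_eq_gone q s m, fun k hk => ?_⟩
  cases k with
  | ofNat n =>
    simp only [Int.ofNat_eq_natCast, Int.natAbs_natCast, Nat.cast_nonneg, if_true, zpow_natCast,
      Nat.cast_inj] at hk ⊢
    rcases hk.lt_or_eq with hn | rfl
    · rw [gone_pow_mul_of_lt hq hs hn, if_neg hn.ne]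
    · rw [gone_pow_mul_self hq hq1 hs hs1, if_pos rfl]
  | negSucc n =>
    rw [if_neg (Int.negSucc_lt_zero n).not_ge, if_neg (by omega), zpow_negSucc]
    exact gone_inv_pow_mul_inv_of_lt hq hs (by simpa using hk)
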